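/- Let F : [0,∞) → ℝ be monotone nondecreasing, c > 0, and let U, V : [0,∞) → ℝ be continuously differentiable with U(0) = V(0). Assume c·(U(τ) − V(τ)) ≤ F(V'(τ)) − F(U'(τ)) for all τ ≥ 0, and that U', V' ≥ 0. Then U(τ) ≤ V(τ) for all τ ≥ 0. -/

import Mathlib

/-! If `U - V` were positive at some `τ₀`, take the last point `t < τ₀` where it is `≤ 0`.
On `(t, τ₀]` we have `c (U - V) > 0`, so `F (U') < F (V')` and, `F` being monotone, `U' < V'`:
`U - V` strictly decreases on `[t, τ₀]`, which is absurd. -/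

open Set

theorem exists_last_nonpos_of_continuousOn {W : ℝ → ℝ} {a b : ℝ} (hab : a ≤ b)
    (hW : ContinuousOn W (Icc a b)) (ha : W a ≤ 0) (hb : 0 < W b) :
    ∃ t ∈ Ico a b, W t ≤ 0 ∧ ∀ x ∈ Ioc t b, 0 < W x := by
  set S := Icc a b ∩ W ⁻¹' Iic 0
  have haS : a ∈ S := ⟨⟨le_rfl, hab⟩, ha⟩
  have hbdd : BddAbove S := ⟨b, fun x hx => hx.1.2⟩
  have htS : sSup S ∈ S :=
    (hW.preimage_isClosed_of_isClosed isClosed_Icc isClosed_Iic).csSup_mem ⟨a, haS⟩ hbdd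
  refine ⟨sSup S, ⟨htS.1.1, htS.1.2.lt_of_ne ?_⟩, htS.2, fun x hx => ?_⟩
  · intro hb'
    exact (htS.2.trans_lt (hb' ▸ hb)).false
  · by_contra! hWx
    have hxS : x ∈ S := ⟨⟨htS.1.1.trans hx.1.le, hx.2⟩, hWx⟩
    exact (le_csSup hbdd hxS).not_gt hx.1

theorem nonpos_of_deriv_neg_of_pos {W W' : ℝ → ℝ} {a : ℝ} (hcont : ContinuousOn W (Ici a))
    (hderiv : ∀ x ∈ Ioi a, HasDerivAt W (W' x) x) (ha : W a ≤ 0)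
    (hneg : ∀ x ∈ Ioi a, 0 < W x → W' x < 0) :
    ∀ x ∈ Ici a, W x ≤ 0 := by
  intro b hab
  by_contra! hb
  obtain ⟨t, ⟨hat, htb⟩, ht, hpos⟩ :=
    exists_last_nonpos_of_continuousOn hab (hcont.mono Icc_subset_Ici_self) ha hb
  have hsub : Icc t b ⊆ Ici a := fun x hx => hat.trans hx.1
  have hanti : StrictAntiOn W (Icc t b) := by
    refine strictAntiOn_of_hasDerivWithinAt_neg (f' := W') (convex_Icc t b) (hcont.mono hsub)
      (fun x hx => ?_) (fun x hx => ?_) <;> rw [interior_Icc] at hx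
    · exact (hderiv x (hat.trans_lt hx.1)).hasDerivWithinAt
    · exact hneg x (hat.trans_lt hx.1) (hpos x ⟨hx.1, hx.2.le⟩)
  have := hanti (left_mem_Icc.2 htb.le) (right_mem_Icc.2 htb.le) htb
  linarith

theorem stmt_8_general (F : ℝ → ℝ) (hF : MonotoneOn F (Set.Ici 0))
    (c : ℝ) (hc : 0 < c)
    (U V U' V' : ℝ → ℝ)
    (hU : ∀ τ, HasDerivAt U (U' τ) τ) (hV : ∀ τ, HasDerivAt V (V' τ) τ)
    (hU'0 : ∀ τ, 0 ≤ U' τ) (hV'0 : ∀ τ, 0 ≤ V' τ)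
    (h0 : U 0 = V 0)
    (hineq : ∀ τ, 0 ≤ τ → c * (U τ - V τ) ≤ F (V' τ) - F (U' τ)) :
    ∀ τ, 0 ≤ τ → U τ ≤ V τ := by
  have hUV : ∀ τ, HasDerivAt (U - V) (U' τ - V' τ) τ := fun τ => (hU τ).sub (hV τ)
  have hneg : ∀ τ ∈ Ioi (0 : ℝ), 0 < (U - V) τ → U' τ - V' τ < 0 := by
    intro τ hτ hpos
    have hF_lt : F (U' τ) < F (V' τ) := by
      linarith [hineq τ hτ.le, mul_pos hc (show 0 < U τ - V τ from hpos)]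
    exact sub_neg.2 (hF.reflect_lt (hU'0 τ) (hV'0 τ) hF_lt)
  intro τ hτ
  exact sub_nonpos.1 <| nonpos_of_deriv_neg_of_pos
    (fun x _ => (hUV x).continuousAt.continuousWithinAt) (fun x _ => hUV x) (by simp [h0]) hneg τ hτ

theorem stmt_8 (F : ℝ → ℝ) (hF : MonotoneOn F (Set.Ici 0))
    (c : ℝ) (hc : 0 < c)
    (U V U' V' : ℝ → ℝ)
    (hU : ∀ τ, HasDerivAt U (U' τ) τ) (hV : ∀ τ, HasDerivAt V (V' τ) τ)
    (hU'c : Continuous U') (hV'c : Continuous V')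
    (hU'0 : ∀ τ, 0 ≤ U' τ) (hV'0 : ∀ τ, 0 ≤ V' τ)
    (h0 : U 0 = V 0)
    (hineq : ∀ τ, 0 ≤ τ → c * (U τ - V τ) ≤ F (V' τ) - F (U' τ)) :
    ∀ τ, 0 ≤ τ → U τ ≤ V τ :=
  stmt_8_general F hF c hc U V U' V' hU hV hU'0 hV'0 h0 hineq
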